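/- arXiv:2512.20078 — 3 statements merged into one kernel-verified Lean document; each statement's English description precedes it below -/
import Mathlib

section
/- The degenerate Genocchi numbers are related to degenerate Bernoulli numbers by 𝓖_{n,λ} = 2(β_{n,λ} - 2^n β_{n,λ/2}) for all n ≥ 0. -/
/-- The degenerate falling factorial `(x)_{n,λ} = x(x-λ)(x-2λ)⋯(x-(n-1)λ)`. -/
def degFall (l x : ℝ) : ℕ → ℝ
  | 0 => 1
  | n + 1 => degFall l x n * (x - n * l)

/-- The degenerate rising factorial `⟨x⟩_{n,λ} = x(x+λ)(x+2λ)⋯(x+(n-1)λ)`. -/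
def degRise (l x : ℝ) : ℕ → ℝ
  | 0 => 1
  | n + 1 => degRise l x n * (x + n * l)

/-- The degenerate exponential `e_λ^x(t) = Σ (x)_{n,λ} tⁿ/n!` as a formal power series. -/
noncomputable def degExp (l x : ℝ) : PowerSeries ℝ :=
  PowerSeries.mk fun n => degFall l x n / n.factorial

/-! The substitution `t ↦ 2t` turns `e_{λ/2}(t)` into `e_λ(t)²`, because `x ↦ e_λ^x(t)` is a
homomorphism (the degenerate Vandermonde identity). Hence `t ↦ 2t` applied to the generating
function of `β_{n,λ/2}` gives a solution `U` of `(e_λ² - 1) U = 2t`, and the partial fractions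
`2/(e+1) = 2/(e-1) - 4/(e²-1)` give the identity once the factor `e_λ² - 1 ≠ 0` is cancelled
in the domain `ℝ⟦t⟧`. -/

open PowerSeries Finset

theorem degFall_add (l x y : ℝ) (n : ℕ) :
    degFall l (x + y) n =
      ∑ ij ∈ antidiagonal n, (n.choose ij.1 : ℝ) * (degFall l x ij.1 * degFall l y ij.2) := by
  induction n with
  | zero => simp [degFall]
  | succ n ih =>
    rw [sum_antidiagonal_choose_succ_mul (fun i j => degFall l x i * degFall l y j),
      ← sum_add_distrib, degFall, ih, sum_mul]
    refine sum_congr rfl fun ij hij => ?_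
    obtain rfl : n = ij.1 + ij.2 := (mem_antidiagonal.mp hij).symm
    rw [Nat.choose_symm_add, degFall, degFall]
    push_cast
    ring

theorem degExp_add (l x y : ℝ) : degExp l (x + y) = degExp l x * degExp l y := by
  ext n
  rw [coeff_mul, degExp, coeff_mk, degFall_add, sum_div]
  refine sum_congr rfl fun ij hij => ?_
  obtain rfl : ij.1 + ij.2 = n := mem_antidiagonal.mp hij
  simp only [degExp, coeff_mk]
  rw [Nat.cast_choose ℝ (Nat.le_add_right _ _), Nat.add_sub_cancel_left]
  field_simp

theorem degFall_mul (c l x : ℝ) (n : ℕ) : degFall (c * l) (c * x) n = c ^ n * degFall l x n := by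
  induction n with
  | zero => simp [degFall]
  | succ n ih => rw [degFall, degFall, ih]; ring

theorem rescale_degExp (c l x : ℝ) : rescale c (degExp l x) = degExp (c * l) (c * x) := by
  ext n
  simp only [degExp, coeff_rescale, coeff_mk, degFall_mul, mul_div_assoc]

theorem rescale_two_degExp_div_two (l x : ℝ) :
    rescale 2 (degExp (l / 2) x) = degExp l x ^ 2 := by
  rw [rescale_degExp, mul_div_cancel₀ l two_ne_zero, two_mul, degExp_add, sq]

theorem constantCoeff_degExp (l x : ℝ) : constantCoeff (degExp l x) = 1 := by
  simp [degExp, degFall]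

theorem coeff_one_degExp (l x : ℝ) : coeff 1 (degExp l x) = x := by
  simp [degExp, degFall]

theorem degGenocchi_eq_degBernoulli_general (l : ℝ) (B B' G : ℕ → ℝ)
    (hB : (degExp l 1 - 1) * PowerSeries.mk (fun n => B n / n.factorial) = PowerSeries.X)
    (hB' : (degExp (l / 2) 1 - 1) * PowerSeries.mk (fun n => B' n / n.factorial)
        = PowerSeries.X)
    (hG : (degExp l 1 + 1) * PowerSeries.mk (fun n => G n / n.factorial)
        = 2 * PowerSeries.X)
    (n : ℕ) :
    G n = 2 * (B n - 2 ^ n * B' n) := by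
  set E := degExp l 1
  have hB'_rescaled : (E ^ 2 - 1) * rescale 2 (mk fun n => B' n / n.factorial) = 2 * X := by
    simpa [rescale_two_degExp_div_two, rescale_X, map_ofNat C 2] using congrArg (rescale (2 : ℝ)) hB'
  have hE_sq_ne : E ^ 2 - 1 ≠ 0 := by
    rw [show E ^ 2 - 1 = (E - 1) * (E + 1) by ring]
    refine mul_ne_zero (fun h => ?_) (fun h => ?_)
    · simpa [E, coeff_one_degExp] using congrArg (coeff 1) h
    · simpa [E, constantCoeff_degExp] using congrArg constantCoeff h
  have hGB : mk (fun n => G n / n.factorial)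
      = 2 * (mk (fun n => B n / n.factorial) - rescale 2 (mk fun n => B' n / n.factorial)) :=
    mul_left_cancel₀ hE_sq_ne <| by
      linear_combination (E - 1) * hG - 2 * (E + 1) * hB + 2 * hB'_rescaled
  have hcoeff := congrArg (coeff n) hGB
  rw [← map_ofNat C 2, coeff_C_mul, map_sub, coeff_rescale] at hcoeff
  simp only [coeff_mk] at hcoeff
  field_simp at hcoeff
  linear_combination hcoeff

theorem degGenocchi_eq_degBernoulli (l : ℝ) (hl : l ≠ 0) (B B' G : ℕ → ℝ)
    (hB : (degExp l 1 - 1) * PowerSeries.mk (fun n => B n / n.factorial) = PowerSeries.X)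
    (hB' : (degExp (l / 2) 1 - 1) * PowerSeries.mk (fun n => B' n / n.factorial)
        = PowerSeries.X)
    (hG : (degExp l 1 + 1) * PowerSeries.mk (fun n => G n / n.factorial)
        = 2 * PowerSeries.X)
    (n : ℕ) :
    G n = 2 * (B n - 2 ^ n * B' n) :=
  degGenocchi_eq_degBernoulli_general l B B' G hB hB' hG n
end

section
/- Let (a_{0,n})_{n≥0} be any sequence of reals and define a_{k,n} = (1-(k-n)λ) a_{k-1,n} + a_{k-1,n+1} for k ≥ 1, n ≥ 0. Then for all n ≥ 0, a_{n,0} = Σ_{k=0}^{n} C(n,k) (1-λ)_{n-k,λ} a_{0,k}, where (x)_{m,λ} = x(x-λ)⋯(x-(m-1)λ) is the degenerate falling factorial. -/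
open Finset

lemma degFall_shift (l x : ℝ) (s : ℕ) :
    degFall l (x + l) (s + 1) = (x + l) * degFall l x s := by
  induction s with
  | zero => simp [degFall]
  | succ s ih =>
    rw [show s + 1 + 1 = (s+1) + 1 from rfl, degFall, ih, degFall]
    push_cast
    ring

lemma degFall_diff (l x : ℝ) (s : ℕ) :
    degFall l (x + l) s - degFall l x s = s * l * degFall l x (s - 1) := by
  cases s with
  | zero => simp [degFall]
  | succ s =>
    rw [degFall_shift, degFall]
    push_cast
    ring

lemma key (l x : ℝ) (m : ℕ) (b : ℕ → ℝ) :
    ∑ j ∈ Finset.range (m + 2), ((m + 1).choose j : ℝ) * degFall l x (m + 1 - j) * b j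
    = (x - m * l) * ∑ j ∈ Finset.range (m + 1), (m.choose j : ℝ) * degFall l x (m - j) * b j
      + ∑ j ∈ Finset.range (m + 1),
          (m.choose j : ℝ) * degFall l (x + l) (m - j) * b (j + 1) := by
  have h1 : ∑ j ∈ Finset.range (m + 2), ((m + 1).choose j : ℝ) * degFall l x (m + 1 - j) * b j
      = (∑ j ∈ Finset.range (m + 1), (m.choose j : ℝ) * degFall l x (m - j) * b (j + 1))
        + ((∑ j ∈ Finset.range (m + 1), (m.choose (j + 1) : ℝ) * degFall l x (m - j) * b (j + 1))
          + degFall l x (m + 1) * b 0) := by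
    rw [Finset.sum_range_succ', ← add_assoc, ← Finset.sum_add_distrib]
    congr 1
    · apply Finset.sum_congr rfl
      intro j hj
      rw [Nat.succ_sub_succ, Nat.choose_succ_succ]
      push_cast
      ring
    · simp
  have h2 : ∑ j ∈ Finset.range (m + 1), (m.choose j : ℝ) * degFall l x (m + 1 - j) * b j
      = (∑ j ∈ Finset.range (m + 1), (m.choose (j + 1) : ℝ) * degFall l x (m - j) * b (j + 1))
        + degFall l x (m + 1) * b 0 := by
    rw [Finset.sum_range_succ']
    congr 1
    · rw [Finset.sum_range_succ]
      simp [Nat.succ_sub_succ]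
    · simp
  rw [h1, ← h2]
  -- reduce to: A + T = (x - m*l) * S1 + S2, i.e. T - (x-m*l)*S1 = S2 - A
  have h3 : ∑ j ∈ Finset.range (m + 1), (m.choose j : ℝ) * degFall l x (m + 1 - j) * b j
      - (x - m * l) * ∑ j ∈ Finset.range (m + 1), (m.choose j : ℝ) * degFall l x (m - j) * b j
      = ∑ j ∈ Finset.range (m + 1), (m.choose j : ℝ) * (j * l) * degFall l x (m - j) * b j := by
    rw [Finset.mul_sum, ← Finset.sum_sub_distrib]
    apply Finset.sum_congr rfl
    intro j hj
    have hj' : j ≤ m := Nat.lt_succ_iff.mp (Finset.mem_range.mp hj)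
    rw [show m + 1 - j = (m - j) + 1 from by omega, degFall]
    have : ((m - j : ℕ) : ℝ) = (m : ℝ) - j := by
      push_cast [Nat.cast_sub hj']; ring
    rw [this]
    ring
  have h4 : ∑ j ∈ Finset.range (m + 1), (m.choose j : ℝ) * degFall l (x + l) (m - j) * b (j + 1)
      - ∑ j ∈ Finset.range (m + 1), (m.choose j : ℝ) * degFall l x (m - j) * b (j + 1)
      = ∑ j ∈ Finset.range (m + 1),
          (m.choose j : ℝ) * (((m - j : ℕ)) * l) * degFall l x (m - j - 1) * b (j + 1) := by
    rw [← Finset.sum_sub_distrib]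
    apply Finset.sum_congr rfl
    intro j hj
    rw [show (m.choose j : ℝ) * degFall l (x + l) (m - j) * b (j + 1)
        - (m.choose j : ℝ) * degFall l x (m - j) * b (j + 1)
        = (m.choose j : ℝ) * (degFall l (x + l) (m - j) - degFall l x (m - j)) * b (j + 1) from by ring,
      degFall_diff]
    ring
  have h5 : ∑ j ∈ Finset.range (m + 1), (m.choose j : ℝ) * (j * l) * degFall l x (m - j) * b j
      = ∑ j ∈ Finset.range (m + 1),
          (m.choose j : ℝ) * (((m - j : ℕ)) * l) * degFall l x (m - j - 1) * b (j + 1) := by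
    rw [Finset.sum_range_succ' (fun j => (m.choose j : ℝ) * (j * l) * degFall l x (m - j) * b j),
      Finset.sum_range_succ (fun j => (m.choose j : ℝ) * (((m - j : ℕ)) * l) * degFall l x (m - j - 1) * b (j + 1))]
    simp only [Nat.cast_zero, zero_mul, mul_zero, Nat.sub_self, add_zero]
    apply Finset.sum_congr rfl
    intro j hj
    have hj' : j < m := Finset.mem_range.mp hj
    have hss : m - (j + 1) = m - j - 1 := by omega
    rw [hss]
    have hcc : (m.choose (j + 1) : ℝ) * ((j + 1 : ℕ) : ℝ) = (m.choose j : ℝ) * ((m - j : ℕ) : ℝ) := by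
      exact_mod_cast congrArg (Nat.cast : ℕ → ℝ) (Nat.choose_succ_right_eq m j)
    linear_combination (l * degFall l x (m - j - 1) * b (j + 1)) * hcc
  linarith [h3, h4, h5]

lemma degES_aux (l : ℝ) (a : ℕ → ℕ → ℝ)
    (ha : ∀ k n : ℕ, a (k + 1) n
        = (1 - ((k + 1 : ℝ) - n) * l) * a k n + a k (n + 1)) :
    ∀ m n : ℕ, a m n = ∑ j ∈ Finset.range (m + 1),
      (m.choose j : ℝ) * degFall l (1 - (1 - (n : ℝ)) * l) (m - j) * a 0 (n + j) := by
  intro m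
  induction m with
  | zero => intro n; simp [degFall]
  | succ m ih =>
    intro n
    rw [ha m n, ih n, ih (n + 1)]
    have hx : (1 : ℝ) - (1 - ((n : ℝ) + 1)) * l = (1 - (1 - (n : ℝ)) * l) + l := by ring
    have hc : (1 : ℝ) - ((m + 1 : ℝ) - n) * l = (1 - (1 - (n : ℝ)) * l) - m * l := by ring
    push_cast [hx, hc]
    rw [key l (1 - (1 - (n : ℝ)) * l) m (fun j => a 0 (n + j))]
    congr 1
    apply Finset.sum_congr rfl
    intro j hj
    rw [show n + 1 + j = n + (j + 1) from by omega]

theorem degEulerSeidel_final (l : ℝ) (a : ℕ → ℕ → ℝ)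
    (ha : ∀ k n : ℕ, a (k + 1) n
        = (1 - ((k + 1 : ℝ) - n) * l) * a k n + a k (n + 1)) (n : ℕ) :
    a n 0 = ∑ k ∈ Finset.range (n + 1),
      (n.choose k : ℝ) * degFall l (1 - l) (n - k) * a 0 k := by
  have := degES_aux l a ha n 0
  simpa using this
end

section
/- Let (a_{0,n})_{n≥0} be any sequence of reals and define a_{k,n} = (1-(k-n)λ) a_{k-1,n} + a_{k-1,n+1} for k ≥ 1, n ≥ 0. Then for all n ≥ 0, a_{0,n} = Σ_{k=0}^{n} C(n,k) (-1)^{n-k} ⟨1-λ⟩_{n-k,λ} a_{k,0}, where ⟨x⟩_{m,λ} = x(x+λ)⋯(x+(m-1)λ) is the degenerate rising factorial. -/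
lemma degRise_succ (l x : ℝ) (n : ℕ) : degRise l x (n + 1) = degRise l x n * (x + n * l) := rfl

lemma degRise_shift (l x : ℝ) : ∀ n : ℕ, degRise l (x - l) (n + 1) = (x - l) * degRise l x n := by
  intro n
  induction n with
  | zero => simp [degRise]
  | succ n ih =>
    rw [degRise_succ, ih, degRise_succ]
    push_cast
    ring

lemma key_s13 (l : ℝ) (a : ℕ → ℕ → ℝ)
    (ha : ∀ k n : ℕ, a (k + 1) n
        = (1 - ((k + 1 : ℝ) - n) * l) * a k n + a k (n + 1)) :
    ∀ n m : ℕ, a m n = ∑ k ∈ Finset.range (n + 1),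
      (n.choose k : ℝ) * (-1) ^ (n - k) * degRise l (1 - ((m : ℝ) + 1) * l) (n - k) * a (m + k) 0 := by
  intro n
  induction n with
  | zero => intro m; simp [degRise]
  | succ n ih =>
    intro m
    have h1 : a m (n + 1) = a (m + 1) n - (1 - ((m + 1 : ℝ) - n) * l) * a m n := by
      have := ha m n; linarith
    rw [h1, ih (m + 1), ih m]
    set x : ℝ := 1 - ((m : ℝ) + 1) * l with hx
    have hx1 : (1 : ℝ) - ((↑(m + 1) : ℝ) + 1) * l = x - l := by rw [hx]; push_cast; ring
    simp only [hx1]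
    set c : ℝ := 1 - ((m : ℝ) + 1 - (n : ℝ)) * l with hc
    set P : ℕ → ℝ := fun k => (n.choose k : ℝ) * (-1) ^ (n - k) * degRise l (x - l) (n - k) * a (m + 1 + k) 0 with hP
    set Q : ℕ → ℝ := fun k => (n.choose k : ℝ) * (-1) ^ (n - k) * degRise l x (n - k) * a (m + k) 0 with hQ
    set F : ℕ → ℝ := fun k => ((n + 1).choose k : ℝ) * (-1) ^ (n + 1 - k) * degRise l x (n + 1 - k) * a (m + k) 0 with hF
    show (∑ k ∈ Finset.range (n + 1), P k) - c * (∑ k ∈ Finset.range (n + 1), Q k)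
        = ∑ k ∈ Finset.range (n + 1 + 1), F k
    rw [Finset.sum_range_succ' F (n + 1), Finset.sum_range_succ (fun k => F (k + 1)) n,
      Finset.sum_range_succ P n, Finset.sum_range_succ' Q n]
    have hpt : ∀ k ∈ Finset.range n, F (k + 1) = P k - c * Q (k + 1) := by
      intro k hk
      rw [Finset.mem_range] at hk
      obtain ⟨j, rfl⟩ : ∃ j, n = k + 1 + j := ⟨n - (k + 1), by omega⟩
      simp only [hP, hQ, hF]
      rw [show k + 1 + j + 1 - (k + 1) = j + 1 from by omega,
        show k + 1 + j - k = j + 1 from by omega,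
        show k + 1 + j - (k + 1) = j from by omega,
        show m + 1 + k = m + (k + 1) from by omega,
        degRise_shift, degRise_succ, pow_succ]
      have pascal : (((k + 1 + j + 1).choose (k + 1)) : ℝ)
          = ((k + 1 + j).choose k : ℝ) + ((k + 1 + j).choose (k + 1) : ℝ) := by
        rw [show k + 1 + j + 1 = (k + j + 1) + 1 from by omega]
        rw [Nat.choose_succ_succ (k + j + 1) k]
        push_cast
        rw [show k + j + 1 = k + 1 + j from by omega]
      have hkc : (((k + 1 + j).choose (k + 1)) : ℝ) * (k + 1) = ((k + 1 + j).choose k : ℝ) * (j + 1) := by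
        have := Nat.choose_succ_right_eq (k + 1 + j) k
        have h2 : k + 1 + j - k = j + 1 := by omega
        rw [h2] at this
        exact_mod_cast congrArg (Nat.cast : ℕ → ℝ) this
      rw [hc, pascal]
      push_cast
      rw [hx]
      linear_combination (-1 : ℝ) ^ j * degRise l (1 - ((m : ℝ) + 1) * l) j * a (m + (k + 1)) 0 * l * hkc
    rw [Finset.sum_congr rfl hpt, Finset.sum_sub_distrib, ← Finset.mul_sum]
    have hPn : P n = F (n + 1) := by
      simp only [hP, hF, show m + 1 + n = m + (n + 1) from by omega]
      simp [degRise]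
    have hQ0 : c * Q 0 = -F 0 := by
      simp only [hQ, hF]
      simp only [Nat.choose_zero_right, Nat.sub_zero, Nat.add_sub_cancel, Nat.choose_self]
      rw [degRise_succ, pow_succ, hc]
      push_cast
      ring
    rw [hPn]
    rw [show c * ((∑ k ∈ Finset.range n, Q (k + 1)) + Q 0)
        = c * (∑ k ∈ Finset.range n, Q (k + 1)) + c * Q 0 from by ring, hQ0]
    ring

theorem degEulerSeidel_initial (l : ℝ) (a : ℕ → ℕ → ℝ)
    (ha : ∀ k n : ℕ, a (k + 1) n
        = (1 - ((k + 1 : ℝ) - n) * l) * a k n + a k (n + 1)) (n : ℕ) :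
    a 0 n = ∑ k ∈ Finset.range (n + 1),
      (n.choose k : ℝ) * (-1) ^ (n - k) * degRise l (1 - l) (n - k) * a k 0 := by
  have := key_s13 l a ha n 0
  simpa using this
end
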